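/- If t⁰ is not a global minimizer of ψ, then the function h ↦ ψ(h t* + (1−h) t⁰) attains its minimum over [0,1] at some h* ∈ [0,1], and the point t¹ = h* t* + (1−h*) t⁰ satisfies ψ(t¹) < ψ(t⁰). -/

import Mathlib

/-!
`ψ` and `ψ̃` agree at `t⁰` and differ by `l - l̃ = o(‖t - t⁰‖)`; both are convex, `ψ̃` because
the Hessian of a convex function is positive semidefinite. If `f` is convex with `f y < f x` and
`g` agrees with `f` at `x` up to `o(‖t - x‖)`, then `g` also drops strictly below `g x` at small
steps from `x` towards `y`. Applied with `f = ψ`, this shows that `t⁰` does not minimize `ψ̃`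
either, so `ψ̃(t*) < ψ̃(t⁰)`; applied with `f = ψ̃`, it gives a small `h ∈ (0, 1)` with
`ψ(h t* + (1 - h) t⁰) < ψ(t⁰)`, which bounds the minimum over `[0, 1]` (attained by compactness).
-/

noncomputable def taylor2 {n : ℕ} (l : (Fin n → ℝ) → ℝ) (t0 t : Fin n → ℝ) : ℝ :=
  l t0 + fderiv ℝ l t0 (t - t0)
    + (1 / 2) * fderiv ℝ (fun x => fderiv ℝ l x) t0 (t - t0) (t - t0)

open Filter Set Topology Asymptotics

theorem ConvexOn.fderiv_fderiv_apply_self_nonneg {E : Type*} [NormedAddCommGroup E]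
    [NormedSpace ℝ E] {l : E → ℝ} (hconv : ConvexOn ℝ univ l) (hl : Differentiable ℝ l) {x : E}
    (hl' : DifferentiableAt ℝ (fderiv ℝ l) x) (d : E) :
    0 ≤ fderiv ℝ (fderiv ℝ l) x d d := by
  have hline : ∀ s : ℝ, HasDerivAt (fun s : ℝ => x + s • d) d s := fun s => by
    simpa using ((hasDerivAt_id s).smul_const d).const_add x
  have hslope : ∀ s : ℝ,
      HasDerivAt (fun s : ℝ => l (x + s • d)) (fderiv ℝ l (x + s • d) d) s :=
    fun s => (hl _).hasFDerivAt.comp_hasDerivAt s (hline s)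
  have hconv_line : ConvexOn ℝ univ (fun s : ℝ => l (x + s • d)) := by
    simpa [Function.comp_def, AffineMap.lineMap_apply_module', add_comm] using
      hconv.comp_affineMap (AffineMap.lineMap x (x + d))
  have hmono : Monotone fun s : ℝ => fderiv ℝ l (x + s • d) d := by
    intro a b hab
    simpa only [(hslope _).deriv] using
      hconv_line.monotoneOn_deriv (fun s _ => (hslope s).differentiableAt) trivial trivial hab
  have hd2 : HasDerivAt (fun s : ℝ => fderiv ℝ l (x + s • d) d)
      (fderiv ℝ (fderiv ℝ l) x d d) 0 := by
    simpa using
      (hl'.hasFDerivAt.comp_hasDerivAt_of_eq 0 (hline 0) (by simp)).clm_apply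
        (hasDerivAt_const 0 d)
  exact hd2.nonneg_of_monotone hmono

theorem ConvexOn.eventually_lt_of_isLittleO {E : Type*} [NormedAddCommGroup E]
    [NormedSpace ℝ E] {f g : E → ℝ} {x y : E} (hf : ConvexOn ℝ univ f)
    (hgf : (fun t => g t - f t) =o[𝓝 x] (fun t => t - x)) (hx : g x = f x) (hy : f y < f x) :
    ∀ᶠ h in 𝓝[>] (0 : ℝ), g (h • y + (1 - h) • x) < g x := by
  have hδ : 0 < f x - f y := sub_pos.mpr hy
  have hseg : Tendsto (fun h : ℝ => h • y + (1 - h) • x) (𝓝 0) (𝓝 x) := by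
    have : Continuous (fun h : ℝ => h • y + (1 - h) • x) := by fun_prop
    simpa using this.tendsto 0
  have hrem : (fun h : ℝ => g (h • y + (1 - h) • x) - f (h • y + (1 - h) • x)) =o[𝓝 0] id := by
    refine (hgf.comp_tendsto hseg).trans_isBigO (IsBigO.of_bound ‖y - x‖ ?_)
    filter_upwards with h
    have : h • y + (1 - h) • x - x = h • (y - x) := by module
    simp [this, norm_smul, mul_comm]
  filter_upwards [nhdsWithin_le_nhds (hrem.bound (half_pos hδ)),
    Ioo_mem_nhdsGT (zero_lt_one' ℝ)] with h hbound ⟨hh0, hh1⟩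
  have hconv : f (h • y + (1 - h) • x) ≤ h * f y + (1 - h) * f x :=
    hf.2 trivial trivial hh0.le (sub_nonneg.mpr hh1.le) (by ring)
  have hclose : g (h • y + (1 - h) • x) - f (h • y + (1 - h) • x) ≤ (f x - f y) / 2 * h := by
    simpa only [Real.norm_eq_abs, id, abs_of_pos hh0] using (le_abs_self _).trans hbound
  calc g (h • y + (1 - h) • x)
      = f (h • y + (1 - h) • x) + (g (h • y + (1 - h) • x) - f (h • y + (1 - h) • x)) := by ring
    _ ≤ h * f y + (1 - h) * f x + (f x - f y) / 2 * h := add_le_add hconv hclose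
    _ = g x - (f x - f y) / 2 * h := by rw [hx]; ring
    _ < g x := by linarith [mul_pos hδ hh0]

section Taylor

variable {n : ℕ} {l : (Fin n → ℝ) → ℝ} {t0 : Fin n → ℝ}

theorem taylor2_self : taylor2 l t0 t0 = l t0 := by
  simp [taylor2]

theorem isLittleO_sub_taylor2 (hl : DifferentiableAt ℝ l t0) :
    (fun t => l t - taylor2 l t0 t) =o[𝓝 t0] (fun t => t - t0) := by
  set B := fderiv ℝ (fun x => fderiv ℝ l x) t0
  have hquad : (fun t => B (t - t0) (t - t0)) =o[𝓝 t0] (fun t => t - t0) :=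
    (IsBigO.of_bound ‖B‖ (Eventually.of_forall fun t => by
      simpa [sq, mul_assoc] using B.le_opNorm₂ (t - t0) (t - t0))).trans_isLittleO
      (isLittleO_pow_sub_sub t0 one_lt_two)
  refine (hl.hasFDerivAt.isLittleO.sub (hquad.const_mul_left (1 / 2))).congr_left fun t => ?_
  simp only [taylor2, B]
  ring

theorem convexOn_taylor2 (hB : ∀ d, 0 ≤ fderiv ℝ (fun x => fderiv ℝ l x) t0 d d) :
    ConvexOn ℝ univ (taylor2 l t0) := by
  refine ⟨convex_univ, fun x _ y _ a b ha hb hab => ?_⟩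
  obtain rfl : b = 1 - a := by linarith
  have hsplit : a • x + (1 - a) • y - t0 = a • (x - t0) + (1 - a) • (y - t0) := by module
  have hxy : x - y = (x - t0) - (y - t0) := by abel
  -- the convexity gap of a quadratic form is `a (1 - a) B (x - y) (x - y)`
  have hgap := mul_nonneg (mul_nonneg ha hb) (hB (x - y))
  simp only [taylor2, hsplit, hxy, map_add, map_sub, map_smul, add_apply, sub_apply, smul_apply,
    smul_eq_mul] at hgap ⊢
  linear_combination (1 / 2 : ℝ) * hgap

end Taylor

/-- if `t⁰` is not a global minimizer of `ψ = l + P`, then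
`h ↦ ψ(h t* + (1 − h) t⁰)` attains its minimum over `[0, 1]` at some `h* ∈ [0, 1]`, and
the point `t¹ = h* t* + (1 − h*) t⁰` satisfies `ψ(t¹) < ψ(t⁰)`. -/
theorem stmt2 {n : ℕ} (l P : (Fin n → ℝ) → ℝ)
    (hl_smooth : ContDiff ℝ 2 l) (hl_conv : ConvexOn ℝ Set.univ l)
    (hP_conv : ConvexOn ℝ Set.univ P)
    (t0 tstar : Fin n → ℝ)
    (ψ : (Fin n → ℝ) → ℝ) (hψ : ∀ t, ψ t = l t + P t)
    (ψt : (Fin n → ℝ) → ℝ) (hψt : ∀ t, ψt t = taylor2 l t0 t + P t)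
    (htstar : ∀ t, ψt tstar ≤ ψt t)
    (hnotmin : ¬ ∀ t, ψ t0 ≤ ψ t) :
    ∃ hstar ∈ Set.Icc (0 : ℝ) 1,
      (∀ h ∈ Set.Icc (0 : ℝ) 1,
          ψ (hstar • tstar + (1 - hstar) • t0) ≤ ψ (h • tstar + (1 - h) • t0)) ∧
      ψ (hstar • tstar + (1 - hstar) • t0) < ψ t0 := by
  obtain rfl : ψ = l + P := funext hψ
  obtain rfl : ψt = taylor2 l t0 + P := funext hψt
  have hl_diff : Differentiable ℝ l := hl_smooth.differentiable (by norm_num)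
  have hhess : ∀ d, 0 ≤ fderiv ℝ (fun x => fderiv ℝ l x) t0 d d :=
    hl_conv.fderiv_fderiv_apply_self_nonneg hl_diff
      ((hl_smooth.fderiv_right le_rfl).differentiable one_ne_zero t0)
  have hψt_conv : ConvexOn ℝ univ (taylor2 l t0 + P) := (convexOn_taylor2 hhess).add hP_conv
  have hrem : (fun t => (l + P) t - (taylor2 l t0 + P) t) =o[𝓝 t0] (fun t => t - t0) := by
    simpa using isLittleO_sub_taylor2 (hl_diff t0)
  have hrem' : (fun t => (taylor2 l t0 + P) t - (l + P) t) =o[𝓝 t0] (fun t => t - t0) := by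
    simpa only [neg_sub] using hrem.neg_left
  have hψt0 : (taylor2 l t0 + P) t0 = (l + P) t0 := by simp [taylor2_self]
  have hdesc : (taylor2 l t0 + P) tstar < (taylor2 l t0 + P) t0 := by
    by_contra! hge
    obtain ⟨t, ht⟩ := not_forall.mp hnotmin
    obtain ⟨h, hlt⟩ :=
      ((hl_conv.add hP_conv).eventually_lt_of_isLittleO hrem' hψt0 (not_le.mp ht)).exists
    exact (hlt.trans_le hge).not_ge (htstar _)
  obtain ⟨h, hlt, hh0, hh1⟩ := ((hψt_conv.eventually_lt_of_isLittleO hrem hψt0.symm hdesc).and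
    (Ioo_mem_nhdsGT (zero_lt_one' ℝ))).exists
  have hcont : ContinuousOn (fun h : ℝ => (l + P) (h • tstar + (1 - h) • t0)) (Icc 0 1) :=
    (hl_smooth.continuous.add hP_conv.locallyLipschitz.continuous).comp_continuousOn
      (by fun_prop)
  obtain ⟨hstar, hmem, hmin⟩ := isCompact_Icc.exists_isMinOn (nonempty_Icc.2 zero_le_one) hcont
  exact ⟨hstar, hmem, fun h' hh' => hmin hh', (hmin ⟨hh0.le, hh1.le⟩).trans_lt hlt⟩
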